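/- Given a permutation π ∈ S_n and j ∈ [2, n−1], all reduced words of π that are accepted by the automaton U(j) are accepted at the same state. More precisely: if π has no inversion (i,j) with i < j, all reduced words of π end at the same healthy state; if π has no inversion (j,k) with j < k, all reduced words end at the same state (healthy if π avoids the subword ji for i<j, ill if π contains ji but avoids jki, dead if π contains jki); and otherwise all accepted reduced words end at the same ill state. -/

import Mathlib

/-!
Induct on a reduced word `s_a w` of `π`: reducedness makes `a` a descent of `π` (the value `a + 1`
stands left of `a`, because reduced words have length the number of inversions) and makes `w` a
reduced word of `s_a π`. A letter `s_a` with `a ∉ {j - 1, j}` changes neither the state of `𝕌(j)`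
nor the data of `π` that the state depends on: its inversions `(i, j)` and `(j, k)`, its patterns
`jki`, and the index `j + |inv_j(π)|`. The letter `s_j` moves `j` to `j + 1` on both sides. The
letter `s_{j-1}` makes the automaton ill at `j`, and it dies iff `s_j` occurs later in `w`; in a
reduced word of `s_{j-1} π` this happens iff `π` has an inversion `(b, k)` with `b ≤ j < k`, i.e.
iff `π` has an inversion `(j, k)` or contains `jki`.
-/

/-- The permutation of `ℕ` given by a word in the adjacent transpositions. -/
def wordProd (L : List ℕ) : Equiv.Perm ℕ :=
  (L.map (fun m => Equiv.swap m (m + 1))).prod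

/-- `L` is a reduced word of `π ∈ S_n`. -/
def IsRWord (n : ℕ) (π : Equiv.Perm ℕ) (L : List ℕ) : Prop :=
  (∀ m ∈ L, m ∈ Finset.Icc 1 (n - 1)) ∧ wordProd L = π ∧
    ∀ L' : List ℕ, (∀ m ∈ L', m ∈ Finset.Icc 1 (n - 1)) → wordProd L' = π →
      L.length ≤ L'.length

/-- States of the permutree-sorting automata. -/
inductive AState : Type
  | healthy (m : ℕ) : AState
  | ill (m : ℕ) : AState
  | dead : AState
deriving DecidableEq

/-- Transition function of the automaton `𝕌(j)`. -/
def Ustep : AState → ℕ → AState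
  | .healthy m, x =>
      if x = m then .healthy (m + 1) else if x + 1 = m then .ill m else .healthy m
  | .ill m, x => if x = m then .dead else .ill m
  | .dead, _ => .dead

/-- The state reached by the automaton `𝕌(j)` after reading `L`. -/
def Urun (j : ℕ) (L : List ℕ) : AState := L.foldl Ustep (.healthy j)

open Finset

abbrev adjSwap (a : ℕ) : Equiv.Perm ℕ := Equiv.swap a (a + 1)

section AdjSwap

variable {a j x : ℕ}

lemma adjSwap_apply (a x : ℕ) :
    adjSwap a x = if x = a then a + 1 else if x = a + 1 then a else x :=
  Equiv.swap_apply_def a (a + 1) x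

lemma adjSwap_mul_inv_apply (a : ℕ) (π : Equiv.Perm ℕ) (x : ℕ) :
    (adjSwap a * π)⁻¹ x = π⁻¹ (adjSwap a x) := by
  rw [mul_inv_rev, Equiv.swap_inv, Equiv.Perm.mul_apply]

lemma adjSwap_le_iff (h : a ≠ j) : adjSwap a x ≤ j ↔ x ≤ j := by
  rw [adjSwap_apply]; split_ifs <;> omega

lemma lt_adjSwap_iff (h : a ≠ j) : j < adjSwap a x ↔ j < x := by
  simpa only [not_le] using (adjSwap_le_iff h).not

lemma adjSwap_lt_iff (h : a + 1 ≠ j) : adjSwap a x < j ↔ x < j := by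
  rw [adjSwap_apply]; split_ifs <;> omega

lemma adjSwap_lt_adjSwap {b c : ℕ} (h : b < c) (hne : ¬(b = a ∧ c = a + 1)) :
    adjSwap a b < adjSwap a c := by
  rw [adjSwap_apply, adjSwap_apply]; split_ifs <;> omega

end AdjSwap

lemma wordProd_cons (a : ℕ) (L : List ℕ) : wordProd (a :: L) = adjSwap a * wordProd L := by
  simp [wordProd]

lemma wordProd_apply_le_iff {j : ℕ} {L : List ℕ} (hj : j ∉ L) (x : ℕ) :
    wordProd L x ≤ j ↔ x ≤ j := by
  induction L with
  | nil => rfl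
  | cons a L ih =>
    rw [List.mem_cons, not_or] at hj
    rw [wordProd_cons, Equiv.Perm.mul_apply, adjSwap_le_iff (Ne.symm hj.1), ih hj.2]

def supportedIn (n : ℕ) : Subgroup (Equiv.Perm ℕ) :=
  fixingSubgroup (Equiv.Perm ℕ) (↑(Icc 1 n) : Set ℕ)ᶜ

lemma mem_supportedIn {n : ℕ} {π : Equiv.Perm ℕ} :
    π ∈ supportedIn n ↔ ∀ x, x ∉ Icc 1 n → π x = x := by
  simp [supportedIn, mem_fixingSubgroup_iff, Equiv.Perm.smul_def]

namespace supportedIn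

variable {n x : ℕ} {π : Equiv.Perm ℕ}

lemma apply_mem_Icc_iff (hπ : π ∈ supportedIn n) : π x ∈ Icc 1 n ↔ x ∈ Icc 1 n := by
  refine ⟨fun h => ?_, fun h => ?_⟩ <;> by_contra hc
  · exact hc (mem_supportedIn.1 hπ x hc ▸ h)
  · exact hc (by rwa [π.injective (mem_supportedIn.1 hπ _ hc)])

lemma apply_zero (hπ : π ∈ supportedIn n) : π 0 = 0 :=
  mem_supportedIn.1 hπ 0 (by simp)

lemma apply_eq_self (hπ : π ∈ supportedIn n) (hx : n < x) : π x = x :=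
  mem_supportedIn.1 hπ x (by simp; omega)

lemma apply_le_iff (hπ : π ∈ supportedIn n) : π x ≤ n ↔ x ≤ n := by
  rcases Nat.eq_zero_or_pos x with rfl | hx
  · simp [apply_zero hπ]
  rcases le_or_gt x n with hxn | hxn
  · have := (apply_mem_Icc_iff hπ).2 (mem_Icc.2 ⟨hx, hxn⟩)
    simp only [mem_Icc] at this; omega
  · rw [apply_eq_self hπ hxn]

lemma apply_pos_iff (hπ : π ∈ supportedIn n) : 0 < π x ↔ 0 < x := by
  have h0 := apply_zero hπ
  refine ⟨fun h => Nat.pos_of_ne_zero ?_, fun h => Nat.pos_of_ne_zero fun hx => ?_⟩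
  · rintro rfl; exact h.ne' h0
  · exact h.ne' (π.injective (hx.trans h0.symm))

end supportedIn

lemma adjSwap_mem_supportedIn {n a : ℕ} (ha : a ∈ Icc 1 (n - 1)) : adjSwap a ∈ supportedIn n := by
  rw [mem_supportedIn]; intro x hx
  simp only [mem_Icc] at ha hx
  rw [adjSwap_apply]; split_ifs <;> omega

lemma wordProd_mem_supportedIn {n : ℕ} {L : List ℕ} (hL : ∀ m ∈ L, m ∈ Icc 1 (n - 1)) :
    wordProd L ∈ supportedIn n :=
  Subgroup.list_prod_mem _ (by simpa using fun m hm => adjSwap_mem_supportedIn (hL m hm))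

lemma Equiv.Perm.exists_apply_succ_lt_of_ne_one {σ : Equiv.Perm ℕ} (h : σ ≠ 1) :
    ∃ a, σ (a + 1) < σ a := by
  by_contra! hmono
  have hσ : StrictMono σ := strictMono_nat_of_lt_succ fun a =>
    (hmono a).lt_of_ne (σ.injective.ne a.succ_ne_self.symm)
  refine h (Equiv.ext fun x => ?_)
  exact DFunLike.congr_fun
    (Subsingleton.elim (hσ.orderIsoOfSurjective σ σ.surjective) (OrderIso.refl ℕ)) x

def inversions (n : ℕ) (π : Equiv.Perm ℕ) : Finset (ℕ × ℕ) :=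
  (Icc 1 n ×ˢ Icc 1 n).filter fun bc => bc.1 < bc.2 ∧ π⁻¹ bc.2 < π⁻¹ bc.1

section Inversions

variable {n a : ℕ} {π : Equiv.Perm ℕ}

lemma mem_inversions {b c : ℕ} :
    (b, c) ∈ inversions n π ↔ b ∈ Icc 1 n ∧ c ∈ Icc 1 n ∧ b < c ∧ π⁻¹ c < π⁻¹ b := by
  simp [inversions, and_assoc]

lemma inversions_one : inversions n 1 = ∅ := by
  ext ⟨b, c⟩
  simp only [mem_inversions, inv_one, Equiv.Perm.one_apply, notMem_empty, iff_false]
  omega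

lemma adjSwap_mem_erase_inversions (ha : a ∈ Icc 1 (n - 1)) {b c : ℕ}
    (h : (b, c) ∈ (inversions n (adjSwap a * π)).erase (a, a + 1)) :
    (adjSwap a b, adjSwap a c) ∈ (inversions n π).erase (a, a + 1) := by
  have hs := adjSwap_mem_supportedIn ha
  rw [mem_erase, mem_inversions, adjSwap_mul_inv_apply, adjSwap_mul_inv_apply] at h
  obtain ⟨hne, hb, hc, hbc, hinv⟩ := h
  rw [mem_erase, mem_inversions, supportedIn.apply_mem_Icc_iff hs,
    supportedIn.apply_mem_Icc_iff hs]
  refine ⟨?_, hb, hc, adjSwap_lt_adjSwap hbc (by simpa using hne), hinv⟩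
  simp only [ne_eq, Prod.mk.injEq, Equiv.swap_apply_eq_iff, Equiv.swap_apply_left,
    Equiv.swap_apply_right]
  omega

lemma card_erase_inversions_adjSwap_mul (ha : a ∈ Icc 1 (n - 1)) :
    ((inversions n (adjSwap a * π)).erase (a, a + 1)).card =
      ((inversions n π).erase (a, a + 1)).card := by
  refine card_nbij' (fun bc => (adjSwap a bc.1, adjSwap a bc.2))
    (fun bc => (adjSwap a bc.1, adjSwap a bc.2)) ?_ ?_ ?_ ?_
  · rintro ⟨b, c⟩ h; exact adjSwap_mem_erase_inversions ha h
  · rintro ⟨b, c⟩ h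
    exact adjSwap_mem_erase_inversions ha (by rwa [Equiv.swap_mul_self_mul])
  · rintro ⟨b, c⟩ -; simp
  · rintro ⟨b, c⟩ -; simp

lemma card_inversions_adjSwap_mul_of_lt (ha : a ∈ Icc 1 (n - 1)) (hd : π⁻¹ (a + 1) < π⁻¹ a) :
    (inversions n (adjSwap a * π)).card + 1 = (inversions n π).card := by
  have ha' := mem_Icc.1 ha
  have hmem : (a, a + 1) ∈ inversions n π := by
    rw [mem_inversions]; refine ⟨?_, ?_, by omega, hd⟩ <;> rw [mem_Icc] <;> omega
  have hnotMem : (a, a + 1) ∉ inversions n (adjSwap a * π) := by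
    simp only [mem_inversions, adjSwap_mul_inv_apply, Equiv.swap_apply_left,
      Equiv.swap_apply_right]
    omega
  rw [← card_erase_add_one hmem, ← card_erase_inversions_adjSwap_mul ha,
    erase_eq_of_notMem hnotMem]

lemma card_inversions_adjSwap_mul_of_not_lt (ha : a ∈ Icc 1 (n - 1))
    (hd : ¬π⁻¹ (a + 1) < π⁻¹ a) :
    (inversions n π).card + 1 = (inversions n (adjSwap a * π)).card := by
  have hne : π⁻¹ (a + 1) ≠ π⁻¹ a := π⁻¹.injective.ne (by omega)
  have := card_inversions_adjSwap_mul_of_lt (π := adjSwap a * π) ha (by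
    simp only [adjSwap_mul_inv_apply, Equiv.swap_apply_left, Equiv.swap_apply_right]
    omega)
  rwa [Equiv.swap_mul_self_mul] at this

lemma card_inversions_wordProd_le {L : List ℕ} (hL : ∀ m ∈ L, m ∈ Icc 1 (n - 1)) :
    (inversions n (wordProd L)).card ≤ L.length := by
  induction L with
  | nil => simp [wordProd, inversions_one]
  | cons a L ih =>
    have ha := hL a List.mem_cons_self
    have ih := ih fun m hm => hL m (List.mem_cons_of_mem a hm)
    rw [wordProd_cons, List.length_cons]
    by_cases hd : (wordProd L)⁻¹ (a + 1) < (wordProd L)⁻¹ a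
    · have := card_inversions_adjSwap_mul_of_lt ha hd; omega
    · have := card_inversions_adjSwap_mul_of_not_lt ha hd; omega

lemma exists_descent_of_ne_one (hπ : π ∈ supportedIn n) (h : π ≠ 1) :
    ∃ a ∈ Icc 1 (n - 1), π⁻¹ (a + 1) < π⁻¹ a := by
  have hπ' := inv_mem hπ
  obtain ⟨a, hd⟩ := Equiv.Perm.exists_apply_succ_lt_of_ne_one (inv_ne_one.2 h)
  refine ⟨a, mem_Icc.2 ⟨Nat.pos_of_ne_zero ?_, ?_⟩, hd⟩
  · rintro rfl; simp [supportedIn.apply_zero hπ'] at hd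
  · by_contra hn
    rw [supportedIn.apply_eq_self hπ' (by omega : n < a + 1)] at hd
    have : π⁻¹ a ≤ a := by
      rcases le_or_gt a n with h | h
      · have := (supportedIn.apply_le_iff hπ').2 h; omega
      · rw [supportedIn.apply_eq_self hπ' h]
    omega

lemma exists_word_length_eq_card_inversions (hπ : π ∈ supportedIn n) :
    ∃ L : List ℕ, (∀ m ∈ L, m ∈ Icc 1 (n - 1)) ∧ wordProd L = π ∧
      L.length = (inversions n π).card := by
  induction hk : (inversions n π).card generalizing π with
  | zero =>
    refine ⟨[], by simp, ?_, rfl⟩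
    by_contra h1
    obtain ⟨a, ha, hd⟩ := exists_descent_of_ne_one hπ (Ne.symm h1)
    have := card_inversions_adjSwap_mul_of_lt ha hd; omega
  | succ k ih =>
    obtain ⟨a, ha, hd⟩ := exists_descent_of_ne_one hπ (by rintro rfl; simp [inversions_one] at hk)
    obtain ⟨L, hL, hprod, hlen⟩ := ih (mul_mem (adjSwap_mem_supportedIn ha) hπ)
      (by have := card_inversions_adjSwap_mul_of_lt ha hd; omega)
    exact ⟨a :: L, List.forall_mem_cons.2 ⟨ha, hL⟩,
      by rw [wordProd_cons, hprod, Equiv.swap_mul_self_mul], by simp [hlen]⟩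

end Inversions

namespace IsRWord

variable {n a : ℕ} {π : Equiv.Perm ℕ} {L : List ℕ}

lemma tail (h : IsRWord n π (a :: L)) : IsRWord n (adjSwap a * π) L := by
  obtain ⟨hlet, hprod, hmin⟩ := h
  refine ⟨fun m hm => hlet m (List.mem_cons_of_mem a hm), ?_, fun L' hL' hprod' => ?_⟩
  · rw [← hprod, wordProd_cons, Equiv.swap_mul_self_mul]
  · simpa using hmin (a :: L') (List.forall_mem_cons.2 ⟨hlet a List.mem_cons_self, hL'⟩)
      (by rw [wordProd_cons, hprod', Equiv.swap_mul_self_mul])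

lemma descent (h : IsRWord n π (a :: L)) : π⁻¹ (a + 1) < π⁻¹ a := by
  have ha := h.1 a List.mem_cons_self
  obtain ⟨hlet, hprod, -⟩ := h.tail
  obtain ⟨M, hM, hprodM, hlenM⟩ :=
    exists_word_length_eq_card_inversions (h.2.1 ▸ wordProd_mem_supportedIn h.1)
  have hlen := h.2.2 M hM hprodM
  have hL := card_inversions_wordProd_le hlet
  rw [hprod] at hL
  by_contra hd
  have := card_inversions_adjSwap_mul_of_not_lt ha hd
  simp only [List.length_cons] at hlen
  omega

end IsRWord

section Automaton

variable {j a : ℕ} {L : List ℕ}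

lemma foldl_ustep_dead (L : List ℕ) : L.foldl Ustep .dead = .dead := by
  induction L with
  | nil => rfl
  | cons a L ih => exact ih

lemma foldl_ustep_ill (m : ℕ) (L : List ℕ) :
    L.foldl Ustep (.ill m) = if m ∈ L then .dead else .ill m := by
  induction L with
  | nil => simp
  | cons a L ih =>
    by_cases h : a = m
    · simp [Ustep, h, foldl_ustep_dead]
    · simp [Ustep, h, ih, Ne.symm h]

lemma urun_cons_self : Urun j (j :: L) = Urun (j + 1) L := by
  simp [Urun, Ustep]

lemma urun_succ_cons : Urun (a + 1) (a :: L) = if a + 1 ∈ L then .dead else .ill (a + 1) := by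
  simp [Urun, Ustep, foldl_ustep_ill]

lemma urun_cons_of_ne (h1 : a ≠ j) (h2 : a + 1 ≠ j) : Urun j (a :: L) = Urun j L := by
  simp [Urun, Ustep, h1, h2]

end Automaton

section Patterns

variable (j : ℕ) (π : Equiv.Perm ℕ)

def HasInversionBelow : Prop := ∃ i < j, π⁻¹ j < π⁻¹ i

def HasInversionAbove : Prop := ∃ k, j < k ∧ π⁻¹ k < π⁻¹ j

def HasInversionAcross : Prop := ∃ b k, b ≤ j ∧ j < k ∧ π⁻¹ k < π⁻¹ b

def HasPatternJKI : Prop := ∃ v w, w < j ∧ j < v ∧ π⁻¹ j < π⁻¹ v ∧ π⁻¹ v < π⁻¹ w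

/-- `j + |inv_j(π)|`: the index of the state in which `𝕌(j)` ends unless it dies. -/
def finalIndex : ℕ := j + ((range (π⁻¹ j)).filter fun p => j < π p).card

variable {j π} {a : ℕ}

lemma HasPatternJKI.hasInversionBelow : HasPatternJKI j π → HasInversionBelow j π
  | ⟨_, w, hw, _, h1, h2⟩ => ⟨w, hw, h1.trans h2⟩

lemma hasInversionAcross_iff :
    HasInversionAcross j π ↔ HasInversionAbove j π ∨ HasPatternJKI j π := by
  constructor
  · rintro ⟨b, k, hb, hk, h⟩
    by_cases hkj : π⁻¹ k < π⁻¹ j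
    · exact Or.inl ⟨k, hk, hkj⟩
    have hbj : b ≠ j := by rintro rfl; exact hkj h
    have hne : π⁻¹ k ≠ π⁻¹ j := π⁻¹.injective.ne (by omega)
    exact Or.inr ⟨k, b, by omega, hk, by omega, h⟩
  · rintro (⟨k, hk, h⟩ | ⟨v, w, hw, hv, h1, h2⟩)
    · exact ⟨j, k, le_rfl, hk, h⟩
    · exact ⟨w, v, hw.le, hv, h2⟩

lemma finalIndex_eq_self (h : ¬HasInversionAbove j π) : finalIndex j π = j := by
  simp only [finalIndex, add_eq_left, card_eq_zero, filter_eq_empty_iff, mem_range, not_lt]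
  intro p hp
  by_contra hjp
  exact h ⟨π p, not_le.1 hjp, by simpa using hp⟩

lemma hasInversionAcross_adjSwap_mul_iff (ha : a ≠ j) :
    HasInversionAcross j (adjSwap a * π) ↔ HasInversionAcross j π := by
  simp only [HasInversionAcross, adjSwap_mul_inv_apply]
  rw [(adjSwap a).exists_congr_left]
  refine exists_congr fun b => ?_
  rw [(adjSwap a).exists_congr_left]
  simp [adjSwap_le_iff ha, lt_adjSwap_iff ha]

lemma hasInversionBelow_adjSwap_mul_iff (h1 : a ≠ j) (h2 : a + 1 ≠ j) :
    HasInversionBelow j (adjSwap a * π) ↔ HasInversionBelow j π := by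
  have hj : adjSwap a j = j := Equiv.swap_apply_of_ne_of_ne (Ne.symm h1) (by omega)
  simp only [HasInversionBelow, adjSwap_mul_inv_apply, hj]
  rw [(adjSwap a).exists_congr_left]
  simp [adjSwap_lt_iff h2]

lemma hasInversionAbove_adjSwap_mul_iff (h1 : a ≠ j) (h2 : a + 1 ≠ j) :
    HasInversionAbove j (adjSwap a * π) ↔ HasInversionAbove j π := by
  have hj : adjSwap a j = j := Equiv.swap_apply_of_ne_of_ne (Ne.symm h1) (by omega)
  simp only [HasInversionAbove, adjSwap_mul_inv_apply, hj]
  rw [(adjSwap a).exists_congr_left]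
  simp [lt_adjSwap_iff h1]

lemma hasPatternJKI_adjSwap_mul_iff (h1 : a ≠ j) (h2 : a + 1 ≠ j) :
    HasPatternJKI j (adjSwap a * π) ↔ HasPatternJKI j π := by
  have hj : adjSwap a j = j := Equiv.swap_apply_of_ne_of_ne (Ne.symm h1) (by omega)
  simp only [HasPatternJKI, adjSwap_mul_inv_apply, hj]
  rw [(adjSwap a).exists_congr_left]
  refine exists_congr fun v => ?_
  rw [(adjSwap a).exists_congr_left]
  simp [adjSwap_lt_iff h2, lt_adjSwap_iff h1]

lemma finalIndex_adjSwap_mul (h1 : a ≠ j) (h2 : a + 1 ≠ j) :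
    finalIndex j (adjSwap a * π) = finalIndex j π := by
  have hj : adjSwap a j = j := Equiv.swap_apply_of_ne_of_ne (Ne.symm h1) (by omega)
  simp only [finalIndex, adjSwap_mul_inv_apply, hj, Equiv.Perm.mul_apply, lt_adjSwap_iff h1]

lemma hasInversionBelow_succ_adjSwap_mul_self_iff (hd : π⁻¹ (j + 1) < π⁻¹ j) :
    HasInversionBelow (j + 1) (adjSwap j * π) ↔ HasInversionBelow j π := by
  simp only [HasInversionBelow, adjSwap_mul_inv_apply, Equiv.swap_apply_right]
  constructor
  · rintro ⟨i, hi, h⟩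
    rcases (Nat.lt_succ_iff.1 hi).eq_or_lt with rfl | hi
    · rw [Equiv.swap_apply_left] at h; omega
    · exact ⟨i, hi, by rwa [Equiv.swap_apply_of_ne_of_ne (by omega) (by omega)] at h⟩
  · rintro ⟨i, hi, h⟩
    exact ⟨i, by omega, by rwa [Equiv.swap_apply_of_ne_of_ne (by omega) (by omega)]⟩

lemma finalIndex_succ_adjSwap_mul_self (hd : π⁻¹ (j + 1) < π⁻¹ j) :
    finalIndex (j + 1) (adjSwap j * π) = finalIndex j π := by
  have hsplit : (range (π⁻¹ j)).filter (fun p => j < π p) =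
      insert (π⁻¹ (j + 1)) ((range (π⁻¹ j)).filter fun p => j + 1 < π p) := by
    ext p
    simp only [mem_filter, mem_range, mem_insert, Equiv.Perm.eq_inv_iff_eq]
    constructor
    · rintro ⟨hp, hjp⟩
      rcases (Nat.succ_le_of_lt hjp).eq_or_lt with h | h
      · exact Or.inl h.symm
      · exact Or.inr ⟨hp, h⟩
    · rintro (h | ⟨hp, h⟩)
      · exact ⟨Equiv.Perm.eq_inv_iff_eq.2 h ▸ hd, by omega⟩
      · exact ⟨hp, by omega⟩
  have hnotMem : π⁻¹ (j + 1) ∉ (range (π⁻¹ j)).filter fun p => j + 1 < π p := by simp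
  have hfilter : ∀ p, j + 1 < adjSwap j (π p) ↔ j + 1 < π p := fun p => by
    rw [adjSwap_apply]; split_ifs <;> omega
  simp only [finalIndex, adjSwap_mul_inv_apply, Equiv.swap_apply_right, Equiv.Perm.mul_apply,
    hfilter, hsplit, card_insert_of_notMem hnotMem]
  omega

end Patterns

lemma mem_of_hasInversionAcross_wordProd {j : ℕ} {L : List ℕ}
    (h : HasInversionAcross j (wordProd L)) : j ∈ L := by
  by_contra hj
  obtain ⟨b, k, hb, hk, hlt⟩ := h
  have key : ∀ x, (wordProd L)⁻¹ x ≤ j ↔ x ≤ j := fun x => by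
    rw [← wordProd_apply_le_iff hj]; simp
  have := (key b).2 hb
  have := (key k).not.2 (by omega)
  omega

namespace IsRWord

variable {n j : ℕ} {π : Equiv.Perm ℕ} {L : List ℕ}

lemma mem_iff_hasInversionAcross (hL : IsRWord n π L) : j ∈ L ↔ HasInversionAcross j π := by
  refine ⟨fun hj => ?_, fun h => mem_of_hasInversionAcross_wordProd (hL.2.1 ▸ h)⟩
  induction L generalizing π with
  | nil => simp at hj
  | cons a L ih =>
    by_cases ha : a = j
    · exact ha ▸ ⟨a, a + 1, le_rfl, a.lt_succ_self, hL.descent⟩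
    · exact (hasInversionAcross_adjSwap_mul_iff ha).1 <|
        ih hL.tail ((List.mem_cons.1 hj).resolve_left (Ne.symm ha))

end IsRWord

structure IsExpectedState (j : ℕ) (π : Equiv.Perm ℕ) (s : AState) : Prop where
  eq_healthy : ¬HasInversionBelow j π → s = .healthy (finalIndex j π)
  eq_ill_or_dead : HasInversionBelow j π → s = .ill (finalIndex j π) ∨ s = .dead
  eq_dead_iff : ¬HasInversionAbove j π → (s = .dead ↔ HasPatternJKI j π)

namespace IsExpectedState

variable {j a : ℕ} {π : Equiv.Perm ℕ} {s : AState}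

lemma one (j : ℕ) : IsExpectedState j 1 (.healthy j) := by
  have hA : ¬HasInversionAbove j 1 := fun ⟨k, hk, h⟩ => by simp at h; omega
  refine ⟨fun _ => by rw [finalIndex_eq_self hA], fun ⟨i, hi, h⟩ => ?_, fun _ => ?_⟩
  · simp at h; omega
  · simp only [reduceCtorEq, false_iff]
    rintro ⟨v, w, hw, hv, -, h⟩
    simp at h; omega

lemma of_adjSwap_mul (h1 : a ≠ j) (h2 : a + 1 ≠ j) (h : IsExpectedState j (adjSwap a * π) s) :
    IsExpectedState j π s := by
  have hB := hasInversionBelow_adjSwap_mul_iff (π := π) h1 h2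
  have hm := finalIndex_adjSwap_mul (π := π) h1 h2
  refine ⟨fun h' => hm ▸ h.eq_healthy (hB.not.2 h'), fun h' => hm ▸ h.eq_ill_or_dead (hB.2 h'),
    fun h' => ?_⟩
  rw [← hasPatternJKI_adjSwap_mul_iff h1 h2]
  exact h.eq_dead_iff ((hasInversionAbove_adjSwap_mul_iff h1 h2).not.2 h')

lemma of_succ_adjSwap_mul_self (hd : π⁻¹ (j + 1) < π⁻¹ j)
    (h : IsExpectedState (j + 1) (adjSwap j * π) s) : IsExpectedState j π s := by
  have hB := hasInversionBelow_succ_adjSwap_mul_self_iff hd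
  have hm := finalIndex_succ_adjSwap_mul_self hd
  exact ⟨fun h' => hm ▸ h.eq_healthy (hB.not.2 h'), fun h' => hm ▸ h.eq_ill_or_dead (hB.2 h'),
    fun h' => absurd ⟨j + 1, j.lt_succ_self, hd⟩ h'⟩

lemma eq_of_ne_dead {s' : AState} (h : IsExpectedState j π s) (h' : IsExpectedState j π s')
    (hs : s ≠ .dead) (hs' : s' ≠ .dead) : s = s' := by
  by_cases hB : HasInversionBelow j π
  · rw [(h.eq_ill_or_dead hB).resolve_right hs, (h'.eq_ill_or_dead hB).resolve_right hs']
  · rw [h.eq_healthy hB, h'.eq_healthy hB]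

open Classical in
lemma eq_ite (h : IsExpectedState j π s) (hA : ¬HasInversionAbove j π) :
    s = if HasPatternJKI j π then .dead
      else if HasInversionBelow j π then .ill (finalIndex j π) else .healthy (finalIndex j π) := by
  split_ifs with hP hB
  · exact (h.eq_dead_iff hA).2 hP
  · exact (h.eq_ill_or_dead hB).resolve_right (mt (h.eq_dead_iff hA).1 hP)
  · exact h.eq_healthy hB

end IsExpectedState

lemma IsRWord.isExpectedState_urun_succ_cons {n a : ℕ} {π : Equiv.Perm ℕ} {L : List ℕ}
    (hL : IsRWord n π (a :: L)) : IsExpectedState (a + 1) π (Urun (a + 1) (a :: L)) := by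
  have hB : HasInversionBelow (a + 1) π := ⟨a, a.lt_succ_self, hL.descent⟩
  have hmem : a + 1 ∈ L ↔ HasInversionAbove (a + 1) π ∨ HasPatternJKI (a + 1) π := by
    rw [hL.tail.mem_iff_hasInversionAcross, hasInversionAcross_adjSwap_mul_iff (by omega),
      hasInversionAcross_iff]
  rw [urun_succ_cons]
  refine ⟨fun h => absurd hB h, fun _ => ?_, fun hA => ?_⟩
  · split_ifs with h
    · exact Or.inr rfl
    · exact Or.inl (by rw [finalIndex_eq_self fun hA => h (hmem.2 (Or.inl hA))])
  · rw [or_iff_right hA] at hmem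
    split_ifs with h <;> simp [h, ← hmem]

lemma IsRWord.isExpectedState_urun {n : ℕ} {π : Equiv.Perm ℕ} {L : List ℕ} (hL : IsRWord n π L)
    (j : ℕ) : IsExpectedState j π (Urun j L) := by
  induction L generalizing j π with
  | nil =>
    obtain rfl : π = 1 := hL.2.1.symm
    exact IsExpectedState.one j
  | cons a L ih =>
    by_cases h1 : a = j
    · subst h1
      rw [urun_cons_self]
      exact (ih hL.tail (a + 1)).of_succ_adjSwap_mul_self hL.descent
    by_cases h2 : a + 1 = j
    · subst h2
      exact hL.isExpectedState_urun_succ_cons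
    rw [urun_cons_of_ne h1 h2]
    exact (ih hL.tail j).of_adjSwap_mul h1 h2

section Positions

variable {n j : ℕ} {π : Equiv.Perm ℕ}

lemma inv_apply_le_of_inversion (hπ : π ∈ supportedIn n) {i : ℕ} (hij : i < j)
    (h : π⁻¹ j < π⁻¹ i) : π⁻¹ i ≤ n := by
  have hπ' := inv_mem hπ
  rw [supportedIn.apply_le_iff hπ']
  by_contra hi
  rw [supportedIn.apply_eq_self hπ' (by omega : n < i),
    supportedIn.apply_eq_self hπ' (by omega : n < j)] at h
  omega

lemma hasInversionBelow_iff_exists_pos (hπ : π ∈ supportedIn n) :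
    HasInversionBelow j π ↔ ∃ i, 1 ≤ i ∧ i < j ∧ π⁻¹ j < π⁻¹ i := by
  refine ⟨fun ⟨i, hi, h⟩ => ⟨i, ?_, hi, h⟩, fun ⟨i, _, hi, h⟩ => ⟨i, hi, h⟩⟩
  exact (supportedIn.apply_pos_iff (inv_mem hπ)).1 ((Nat.zero_le _).trans_lt h)

lemma hasInversionAbove_iff_exists_le (hπ : π ∈ supportedIn n) :
    HasInversionAbove j π ↔ ∃ k, j < k ∧ k ≤ n ∧ π⁻¹ k < π⁻¹ j := by
  have hπ' := inv_mem hπ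
  refine ⟨fun ⟨k, hk, h⟩ => ⟨k, hk, ?_, h⟩, fun ⟨k, hk, _, h⟩ => ⟨k, hk, h⟩⟩
  by_contra hkn
  rw [supportedIn.apply_eq_self hπ' (not_le.1 hkn)] at h
  rcases le_or_gt j n with hj | hj
  · have := (supportedIn.apply_le_iff hπ').2 hj; omega
  · rw [supportedIn.apply_eq_self hπ' hj] at h; omega

lemma hasInversionBelow_iff_exists_apply (hπ : π ∈ supportedIn n) :
    HasInversionBelow j π ↔ ∃ p r, 1 ≤ p ∧ p < r ∧ r ≤ n ∧ π p = j ∧ π r < j := by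
  constructor
  · rintro ⟨i, hi, h⟩
    exact ⟨π⁻¹ j, π⁻¹ i, (supportedIn.apply_pos_iff (inv_mem hπ)).2 (by omega), h,
      inv_apply_le_of_inversion hπ hi h, by simp, by simpa⟩
  · rintro ⟨p, r, -, hpr, -, rfl, hr⟩
    exact ⟨π r, hr, by simpa⟩

lemma hasPatternJKI_iff_exists_apply (hπ : π ∈ supportedIn n) :
    HasPatternJKI j π ↔
      ∃ p u r, 1 ≤ p ∧ p < u ∧ u < r ∧ r ≤ n ∧ π p = j ∧ j < π u ∧ π r < j := by
  constructor
  · rintro ⟨v, w, hw, hv, h1, h2⟩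
    exact ⟨π⁻¹ j, π⁻¹ v, π⁻¹ w, (supportedIn.apply_pos_iff (inv_mem hπ)).2 (by omega), h1,
      h2, inv_apply_le_of_inversion hπ hw (h1.trans h2), by simp, by simpa, by simpa⟩
  · rintro ⟨p, u, r, -, hpu, hur, -, rfl, hu, hr⟩
    exact ⟨π u, π r, hr, hu, by simpa, by simpa⟩

end Positions

theorem permutree_automaton_same_state_general (n j : ℕ)
    (π : Equiv.Perm ℕ) (hπ : ∀ x : ℕ, x ∉ Finset.Icc 1 n → π x = x) :
    (∀ L L' : List ℕ, IsRWord n π L → IsRWord n π L' →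
      Urun j L ≠ AState.dead → Urun j L' ≠ AState.dead → Urun j L = Urun j L') ∧
    ((∀ i : ℕ, 1 ≤ i → i < j → ¬ π.symm j < π.symm i) →
      ∃ m : ℕ, ∀ L : List ℕ, IsRWord n π L → Urun j L = AState.healthy m) ∧
    ((∀ k : ℕ, j < k → k ≤ n → ¬ π.symm k < π.symm j) →
      ∃ q : AState, (∀ L : List ℕ, IsRWord n π L → Urun j L = q) ∧
        ((¬(∃ p r : ℕ, 1 ≤ p ∧ p < r ∧ r ≤ n ∧ π p = j ∧ π r < j) →
            ∃ m : ℕ, q = AState.healthy m) ∧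
         ((∃ p r : ℕ, 1 ≤ p ∧ p < r ∧ r ≤ n ∧ π p = j ∧ π r < j) →
          ¬(∃ p u r : ℕ, 1 ≤ p ∧ p < u ∧ u < r ∧ r ≤ n ∧ π p = j ∧ j < π u ∧ π r < j) →
            ∃ m : ℕ, q = AState.ill m) ∧
         ((∃ p u r : ℕ, 1 ≤ p ∧ p < u ∧ u < r ∧ r ≤ n ∧ π p = j ∧ j < π u ∧ π r < j) →
            q = AState.dead))) ∧
    ((∃ i : ℕ, 1 ≤ i ∧ i < j ∧ π.symm j < π.symm i) →
     (∃ k : ℕ, j < k ∧ k ≤ n ∧ π.symm k < π.symm j) →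
      ∃ m : ℕ, ∀ L : List ℕ, IsRWord n π L → Urun j L ≠ AState.dead →
        Urun j L = AState.ill m) := by
  have hsupp : π ∈ supportedIn n := mem_supportedIn.2 hπ
  have hstate {L : List ℕ} (hL : IsRWord n π L) := hL.isExpectedState_urun j
  refine ⟨fun L L' hL hL' => (hstate hL).eq_of_ne_dead (hstate hL'), fun hno => ?_,
    fun hno => ?_, fun hB _ => ?_⟩
  · refine ⟨finalIndex j π, fun L hL => (hstate hL).eq_healthy fun hB => ?_⟩
    obtain ⟨i, hi, hij, h⟩ := (hasInversionBelow_iff_exists_pos hsupp).1 hB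
    exact hno i hi hij h
  · have hA : ¬HasInversionAbove j π := fun hA => by
      obtain ⟨k, hjk, hkn, h⟩ := (hasInversionAbove_iff_exists_le hsupp).1 hA
      exact hno k hjk hkn h
    rw [← hasInversionBelow_iff_exists_apply hsupp, ← hasPatternJKI_iff_exists_apply hsupp]
    refine ⟨_, fun L hL => (hstate hL).eq_ite hA, fun hB => ?_, fun hB hP => ?_,
      fun hP => if_pos hP⟩
    · rw [if_neg (mt HasPatternJKI.hasInversionBelow hB), if_neg hB]; exact ⟨_, rfl⟩
    · rw [if_neg hP, if_pos hB]; exact ⟨_, rfl⟩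
  · have hB := (hasInversionBelow_iff_exists_pos hsupp).2 hB
    exact ⟨finalIndex j π, fun L hL hd => ((hstate hL).eq_ill_or_dead hB).resolve_right hd⟩

/-- All reduced words of a permutation `π` accepted by `𝕌(j)` are accepted at the same
state; more precisely, with `inv^j(π) = {(i,j) : i < j, π⁻¹(i) > π⁻¹(j)}` and
`inv_j(π) = {(j,k) : j < k, π⁻¹(j) > π⁻¹(k)}`:
if `inv^j(π) = ∅` all reduced words of `π` end at the same healthy state;
if `inv_j(π) = ∅` all reduced words end at the same state, which is healthy if `π`
avoids `ji`, ill if `π` contains `ji` but avoids `jki`, and dead if `π` contains `jki`;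
and otherwise all accepted reduced words end at the same ill state. -/
theorem permutree_automaton_same_state (n j : ℕ) (hj2 : 2 ≤ j) (hjn : j ≤ n - 1)
    (π : Equiv.Perm ℕ) (hπ : ∀ x : ℕ, x ∉ Finset.Icc 1 n → π x = x) :
    (∀ L L' : List ℕ, IsRWord n π L → IsRWord n π L' →
      Urun j L ≠ AState.dead → Urun j L' ≠ AState.dead → Urun j L = Urun j L') ∧
    ((∀ i : ℕ, 1 ≤ i → i < j → ¬ π.symm j < π.symm i) →
      ∃ m : ℕ, ∀ L : List ℕ, IsRWord n π L → Urun j L = AState.healthy m) ∧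
    ((∀ k : ℕ, j < k → k ≤ n → ¬ π.symm k < π.symm j) →
      ∃ q : AState, (∀ L : List ℕ, IsRWord n π L → Urun j L = q) ∧
        ((¬(∃ p r : ℕ, 1 ≤ p ∧ p < r ∧ r ≤ n ∧ π p = j ∧ π r < j) →
            ∃ m : ℕ, q = AState.healthy m) ∧
         ((∃ p r : ℕ, 1 ≤ p ∧ p < r ∧ r ≤ n ∧ π p = j ∧ π r < j) →
          ¬(∃ p u r : ℕ, 1 ≤ p ∧ p < u ∧ u < r ∧ r ≤ n ∧ π p = j ∧ j < π u ∧ π r < j) →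
            ∃ m : ℕ, q = AState.ill m) ∧
         ((∃ p u r : ℕ, 1 ≤ p ∧ p < u ∧ u < r ∧ r ≤ n ∧ π p = j ∧ j < π u ∧ π r < j) →
            q = AState.dead))) ∧
    ((∃ i : ℕ, 1 ≤ i ∧ i < j ∧ π.symm j < π.symm i) →
     (∃ k : ℕ, j < k ∧ k ≤ n ∧ π.symm k < π.symm j) →
      ∃ m : ℕ, ∀ L : List ℕ, IsRWord n π L → Urun j L ≠ AState.dead →
        Urun j L = AState.ill m) :=
  permutree_automaton_same_state_general n j π hπ
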